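/- arXiv:1610.05853 — 9 statements merged into one kernel-verified Lean document; each statement's English description precedes it below -/
import Mathlib

section
/- Let q = p^n where p is prime. Over a field of characteristic p, D_{q+1}(Y) = Y^{q+1} - D_{q-1}(Y). -/
open Polynomial

lemma dickson_one_one_pow_charP {F : Type*} [Field F] (p : ℕ) [Fact p.Prime] [CharP F p]
    (n : ℕ) : dickson 1 (1 : F) (p ^ n) = X ^ (p ^ n) := by
  induction n with
  | zero => simp [dickson_one]
  | succ k ih =>
      rw [pow_succ, dickson_one_one_mul, ih, dickson_one_one_charP, X_pow_comp, ← pow_mul,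
        mul_comm]

/-- Let `q = p^n` with `p` prime. Over a field of characteristic `p`,
`D_(q+1)(Y) = Y^(q+1) - D_(q-1)(Y)`. -/
theorem dickson_q_add_one (F : Type*) [Field F] (p n : ℕ) [Fact p.Prime] [CharP F p]
    (hn : 0 < n) (q : ℕ) (hq : q = p ^ n) :
    dickson 1 (1 : F) (q + 1) = X ^ (q + 1) - dickson 1 (1 : F) (q - 1) := by
  have hp2 : 2 ≤ p := (Fact.out : p.Prime).two_le
  have hq2 : 2 ≤ q := by
    rw [hq]
    calc 2 ≤ p := hp2
    _ = p ^ 1 := (pow_one p).symm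
    _ ≤ p ^ n := Nat.pow_le_pow_right (by omega) hn
  obtain ⟨k, hk⟩ : ∃ k, q = k + 2 := ⟨q - 2, by omega⟩
  have hXq : dickson 1 (1 : F) q = X ^ q := by rw [hq]; exact dickson_one_one_pow_charP p n
  have hpow : (X : F[X]) ^ (q + 1) = X * X ^ q := pow_succ' X q
  rw [show q + 1 = (k + 1) + 2 by omega, dickson_add_two, show k + 1 + 1 = q by omega,
    show k + 1 = q - 1 by omega, hXq, C_1, one_mul, show q - 1 + 2 = q + 1 by omega, hpow]
end

section
/- Let M be a field of characteristic 2 containing F_{q^2}, where q = 2^n, and let u ∈ M with u ∉ F_{q^2}. Then the values ⟨ζu⟩/w := (ζu + (ζu)^{-1})/w, as ζ ranges over the (q+1)-st roots of unity and w ranges over F_q^×, are pairwise distinct. -/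
/-!
Clearing denominators, in characteristic 2 the equality of the two values reads
`u² · ζ₁ζ₂(w₂ζ₁ + w₁ζ₂) = w₁ζ₁ + w₂ζ₂`. All `ζᵢ` and `wᵢ` lie in the subfield of `M` fixed by
`x ↦ x^(q²)`, whose elements are exactly those of `F_(q²)` because `X^(q²) - X` has no further
roots; since squaring is injective, `u²` is not in it. Hence both sides vanish:
`w₂ζ₁ = w₁ζ₂` and `w₁ζ₁ = w₂ζ₂`, so `ζ₁² = ζ₂²`, and then `ζ₁ = ζ₂` and `w₁ = w₂`.
-/

open Polynomial

theorem FiniteField.mem_range_algebraMap_of_pow_card_eq {K M : Type*} [Field K] [Finite K]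
    [CommRing M] [IsDomain M] [Algebra K M] {x : M} (hx : x ^ Nat.card K = x) :
    x ∈ Set.range (algebraMap K M) := by
  have : Fintype K := Fintype.ofFinite K
  rw [Nat.card_eq_fintype_card] at hx
  have hcard : 1 < Fintype.card K := Fintype.one_lt_card
  have hmonic : (X ^ Fintype.card K - X : K[X]).Monic :=
    monic_X_pow_sub (by rw [degree_X]; exact_mod_cast hcard)
  have hroots := hmonic.roots_map_of_card_eq_natDegree (algebraMap K M)
    (by rw [roots_X_pow_card_sub_X, X_pow_card_sub_X_natDegree_eq K hcard]; rfl)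
  have hx_root : x ∈ (map (algebraMap K M) (X ^ Fintype.card K - X)).roots := by
    rw [mem_roots (hmonic.map _).ne_zero]
    simp [hx]
  rw [← hroots, roots_X_pow_card_sub_X] at hx_root
  simpa using hx_root

theorem pow_sq_eq_self_of_pow_succ_eq_one {G : Type*} [Monoid G] {ζ : G} {q : ℕ}
    (hζ : ζ ^ (q + 1) = 1) : ζ ^ q ^ 2 = ζ :=
  calc ζ ^ q ^ 2 = ζ ^ q ^ 2 * ζ ^ (q + 1) := by rw [hζ, mul_one]
    _ = (ζ ^ (q + 1)) ^ q * ζ := by rw [← pow_mul, ← pow_succ, ← pow_add]; congr 1; ring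
    _ = ζ := by rw [hζ, one_pow, one_mul]

namespace CharTwo

variable {M : Type*} [Field M] [CharP M 2]

theorem sq_mul_eq_of_add_inv_div_eq {u ζ₁ ζ₂ w₁ w₂ : M} (hu : u ≠ 0) (hζ₁ : ζ₁ ≠ 0)
    (hζ₂ : ζ₂ ≠ 0) (hw₁ : w₁ ≠ 0) (hw₂ : w₂ ≠ 0)
    (h : (ζ₁ * u + (ζ₁ * u)⁻¹) / w₁ = (ζ₂ * u + (ζ₂ * u)⁻¹) / w₂) :
    u ^ 2 * (ζ₁ * ζ₂ * (w₂ * ζ₁ + w₁ * ζ₂)) = w₁ * ζ₁ + w₂ * ζ₂ := by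
  field_simp at h
  apply mul_left_cancel₀ hu
  linear_combination u * h + (u ^ 3 * w₁ * ζ₁ * ζ₂ ^ 2 - u * w₂ * ζ₂) * two_eq_zero (R := M)

theorem eq_and_eq_of_add_inv_div_eq (F : Subfield M) {u ζ₁ ζ₂ w₁ w₂ : M} (hu : u ^ 2 ∉ F)
    (hζ₁F : ζ₁ ∈ F) (hζ₂F : ζ₂ ∈ F) (hw₁F : w₁ ∈ F) (hw₂F : w₂ ∈ F)
    (hζ₁ : ζ₁ ≠ 0) (hζ₂ : ζ₂ ≠ 0) (hw₁ : w₁ ≠ 0) (hw₂ : w₂ ≠ 0)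
    (h : (ζ₁ * u + (ζ₁ * u)⁻¹) / w₁ = (ζ₂ * u + (ζ₂ * u)⁻¹) / w₂) :
    ζ₁ = ζ₂ ∧ w₁ = w₂ := by
  have hu0 : u ≠ 0 := by rintro rfl; simp [zero_pow two_ne_zero, F.zero_mem] at hu
  have key := sq_mul_eq_of_add_inv_div_eq hu0 hζ₁ hζ₂ hw₁ hw₂ h
  have ha : ζ₁ * ζ₂ * (w₂ * ζ₁ + w₁ * ζ₂) = 0 := by
    by_contra ha
    refine hu ?_
    rw [eq_div_of_mul_eq ha key]
    exact F.div_mem (F.add_mem (F.mul_mem hw₁F hζ₁F) (F.mul_mem hw₂F hζ₂F))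
      (F.mul_mem (F.mul_mem hζ₁F hζ₂F)
        (F.add_mem (F.mul_mem hw₂F hζ₁F) (F.mul_mem hw₁F hζ₂F)))
  have hb : w₁ * ζ₁ = w₂ * ζ₂ := by rw [← CharTwo.add_eq_zero, ← key, ha, mul_zero]
  have ha' : w₂ * ζ₁ = w₁ * ζ₂ :=
    CharTwo.add_eq_zero.1 ((mul_eq_zero.1 ha).resolve_left (mul_ne_zero hζ₁ hζ₂))
  have hζ : ζ₁ = ζ₂ := by
    rw [← sq_inj (R := M)]
    apply mul_left_cancel₀ (mul_ne_zero hw₁ hw₂)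
    linear_combination w₂ * ζ₁ * hb + w₂ * ζ₂ * ha'
  subst hζ
  exact ⟨rfl, mul_right_cancel₀ hζ₁ hb⟩

end CharTwo

/-- Let `M` be a field of characteristic 2 containing `F_(q²)` (`q = 2^n`), and let
`u ∈ M` with `u ∉ F_(q²)`.  Then the values `⟨ζu⟩/w = (ζu + (ζu)⁻¹)/w`, as `ζ` ranges
over the `(q+1)`-st roots of unity and `w` over `F_q^×` (the elements of `M` with
`w^q = w`, `w ≠ 0`), are pairwise distinct. -/
theorem distinct_values (n : ℕ) (hn : 0 < n) (q : ℕ) (hq : q = 2 ^ n)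
    (M : Type*) [Field M] [CharP M 2] [Algebra (GaloisField 2 (2 * n)) M]
    (u : M) (hu : u ∉ Set.range (algebraMap (GaloisField 2 (2 * n)) M))
    (ζ₁ ζ₂ w₁ w₂ : M)
    (hζ₁ : ζ₁ ^ (q + 1) = 1) (hζ₂ : ζ₂ ^ (q + 1) = 1)
    (hw₁ : w₁ ^ q = w₁) (hw₁0 : w₁ ≠ 0) (hw₂ : w₂ ^ q = w₂) (hw₂0 : w₂ ≠ 0)
    (h : (ζ₁ * u + (ζ₁ * u)⁻¹) / w₁ = (ζ₂ * u + (ζ₂ * u)⁻¹) / w₂) :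
    ζ₁ = ζ₂ ∧ w₁ = w₂ := by
  set F := (iterateFrobenius M 2 (2 * n)).eqLocusField (RingHom.id M)
  have mem_F (x : M) : x ∈ F ↔ x ^ q ^ 2 = x := by
    rw [RingHom.mem_eqLocusField, iterateFrobenius_def, hq, ← pow_mul, mul_comm]; rfl
  have hw_mem {w : M} (hw : w ^ q = w) : w ∈ F := by rw [mem_F, sq, pow_mul, hw, hw]
  have hζ_ne {ζ : M} (hζ : ζ ^ (q + 1) = 1) : ζ ≠ 0 := by
    rintro rfl; simp at hζ
  have hu2 : u ^ 2 ∉ F := by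
    rw [mem_F, pow_right_comm, CharTwo.sq_inj]
    intro hfix
    refine hu (FiniteField.mem_range_algebraMap_of_pow_card_eq ?_)
    rwa [GaloisField.card 2 (2 * n) (by omega), pow_mul', ← hq]
  exact CharTwo.eq_and_eq_of_add_inv_div_eq F hu2
    ((mem_F _).2 (pow_sq_eq_self_of_pow_succ_eq_one hζ₁))
    ((mem_F _).2 (pow_sq_eq_self_of_pow_succ_eq_one hζ₂)) (hw_mem hw₁) (hw_mem hw₂)
    (hζ_ne hζ₁) (hζ_ne hζ₂) hw₁0 hw₂0 h
end

section
/- Let M be a field of characteristic 2, y ∈ M nonzero, q = 2^n, and u in the separable closure of M with u^{q+1} + u^{-(q+1)} = y. Then the polynomial f(x) = ∏_{w ∈ F_q^×}(D_{q+1}(wx) - y) has exactly the q^2 - 1 distinct roots w·(ζu + (ζu)^{-1}) for w ∈ F_q^× and ζ a (q+1)-st root of unity. -/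
/-!
Every `x` in a separably closed field of characteristic 2 is `z + z⁻¹` for some `z`, since
`X² + xX + 1` is separable when `x ≠ 0`. As `D_m(z + z⁻¹) = z^m + z⁻ᵐ`, with `s = u^(q+1)` the
equation `D_(q+1)(wx) = s + s⁻¹` says `z^(q+1) ∈ {s, s⁻¹}`, i.e. `z = ζu` up to inversion.
For distinctness, the Frobenius `x ↦ x^q` fixes `𝔽_q` and maps `z = ζu` to `s / z`; comparing a
relation `a(z₁ + z₁⁻¹) = b(z₂ + z₂⁻¹)` with its image gives `(s + 1)²(a z₂ - b z₁) = 0`. Here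
`s ≠ 1` because `y ≠ 0`, so `a z₂ = b z₁`, whose `(q+1)`-st power is `a² = b²`.
-/

open Polynomial

noncomputable instance {n : ℕ} : Fintype (GaloisField 2 n)ˣ := Fintype.ofFinite _

theorem GaloisField.pow_prime_pow_eq_self (p : ℕ) [Fact p.Prime] (n : ℕ) (x : GaloisField p n) :
    x ^ p ^ n = x := by
  rcases eq_or_ne n 0 with rfl | hn
  · rw [pow_zero, pow_one]
  · have := Fintype.ofFinite (GaloisField p n)
    rw [← GaloisField.card p n hn, Nat.card_eq_fintype_card, FiniteField.pow_card]

section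

variable {K : Type*} [Field K]

theorem eq_or_eq_inv_of_add_inv_eq_add_inv {a b : K} (ha : a ≠ 0) (hb : b ≠ 0)
    (h : a + a⁻¹ = b + b⁻¹) : a = b ∨ a = b⁻¹ := by
  have : (a - b) * (a - b⁻¹) = 0 := by
    linear_combination a * h - mul_inv_cancel₀ ha + mul_inv_cancel₀ hb
  simpa [sub_eq_zero] using this

variable [CharP K 2]

theorem exists_add_inv_eq [IsSepClosed K] (t : K) : ∃ z ≠ 0, z + z⁻¹ = t := by
  rcases eq_or_ne t 0 with rfl | ht
  · exact ⟨1, one_ne_zero, by simp [CharTwo.add_self_eq_zero]⟩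
  obtain ⟨z, hz⟩ :=
    IsSepClosed.exists_root_C_mul_X_pow_add_C_mul_X_add_C' 2 2 1 t 1 dvd_rfl le_rfl ht
  have hz0 : z ≠ 0 := by rintro rfl; simp at hz
  refine ⟨z, hz0, ?_⟩
  field_simp
  linear_combination hz - t * z * CharTwo.two_eq_zero (R := K)

theorem dickson_one_one_eval_eq_add_inv_iff [IsSepClosed K] {u : K} (hu : u ≠ 0) (m : ℕ)
    (t : K) : (dickson 1 (1 : K) m).eval t = u ^ m + (u ^ m)⁻¹ ↔
      ∃ ζ : K, ζ ^ m = 1 ∧ t = ζ * u + (ζ * u)⁻¹ := by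
  have hum : u ^ m ≠ 0 := pow_ne_zero m hu
  constructor
  · intro h
    obtain ⟨z, hz0, rfl⟩ := exists_add_inv_eq t
    rw [dickson_one_one_eval_add_inv _ _ (mul_inv_cancel₀ hz0), inv_pow] at h
    rcases eq_or_eq_inv_of_add_inv_eq_add_inv (pow_ne_zero m hz0) hum h with h | h
    · exact ⟨z * u⁻¹, by rw [mul_pow, h, inv_pow, mul_inv_cancel₀ hum],
        by rw [inv_mul_cancel_right₀ hu]⟩
    · exact ⟨z⁻¹ * u⁻¹, by rw [mul_pow, inv_pow, h, inv_inv, inv_pow, mul_inv_cancel₀ hum],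
        by rw [inv_mul_cancel_right₀ hu, inv_inv, add_comm]⟩
  · rintro ⟨ζ, hζ, rfl⟩
    rcases eq_or_ne ζ 0 with rfl | hζ0
    · obtain rfl : m = 0 := zero_pow_eq_one₀.1 hζ
      norm_num
    · rw [dickson_one_one_eval_add_inv _ _ (mul_inv_cancel₀ (mul_ne_zero hζ0 hu)), inv_pow,
        mul_pow, hζ, one_mul]

theorem pow_two_pow_mul_add_inv {n : ℕ} {a z s : K} (ha : a ^ 2 ^ n = a)
    (hz : z ^ (2 ^ n + 1) = s) : (a * (z + z⁻¹)) ^ 2 ^ n = a * (s * z⁻¹ + (s * z⁻¹)⁻¹) := by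
  have hzq : z ^ 2 ^ n = s * z⁻¹ := by
    rcases eq_or_ne z 0 with rfl | hz0
    · simp
    · rw [← hz, pow_succ, mul_inv_cancel_right₀ hz0]
  rw [mul_pow, add_pow_char_pow, ha, inv_pow, hzq]

theorem eq_and_eq_of_mul_add_inv_eq_mul_add_inv {n : ℕ} {s a b z₁ z₂ : K} (hs0 : s ≠ 0) (hs1 : s ≠ 1)
    (ha : a ^ 2 ^ n = a) (hb : b ^ 2 ^ n = b) (ha0 : a ≠ 0)
    (hz₁ : z₁ ^ (2 ^ n + 1) = s) (hz₂ : z₂ ^ (2 ^ n + 1) = s)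
    (h : a * (z₁ + z₁⁻¹) = b * (z₂ + z₂⁻¹)) : a = b ∧ z₁ = z₂ := by
  have hz₁0 : z₁ ≠ 0 := ne_zero_pow (Nat.succ_ne_zero _) (hz₁ ▸ hs0)
  have hz₂0 : z₂ ≠ 0 := ne_zero_pow (Nat.succ_ne_zero _) (hz₂ ▸ hs0)
  have hfrob : a * (s * z₁⁻¹ + (s * z₁⁻¹)⁻¹) = b * (s * z₂⁻¹ + (s * z₂⁻¹)⁻¹) := by
    rw [← pow_two_pow_mul_add_inv ha hz₁, ← pow_two_pow_mul_add_inv hb hz₂, h]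
  have hcross : a * z₂ = b * z₁ := by
    have : (s + 1) ^ 2 * (a * z₂ - b * z₁) = 0 := by
      field_simp at h hfrob
      linear_combination hfrob - h + (s + 1) * (a * z₂ - b * z₁) * CharTwo.two_eq_zero (R := K)
    have hs1' : s + 1 ≠ 0 := fun h ↦ hs1 (CharTwo.add_eq_zero.1 h)
    simpa [sub_eq_zero, hs1'] using this
  have hab : a = b := by
    have := congrArg (· ^ (2 ^ n + 1)) hcross
    rw [mul_pow, mul_pow, hz₁, hz₂, pow_succ, pow_succ, ha, hb] at this
    exact CharTwo.sq_injective (by simpa [sq] using mul_right_cancel₀ hs0 this)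
  subst hab
  exact ⟨rfl, (mul_left_cancel₀ ha0 hcross).symm⟩

end

theorem roots_of_dickson_product_general (n : ℕ) (q : ℕ) (hq : q = 2 ^ n)
    (M : Type*) [Field M] (y : M) (hy : y ≠ 0)
    (K : Type*) [Field K] [Algebra M K]
    [IsSepClosure M K] [Algebra (GaloisField 2 n) K]
    (u : K) (huy : u ^ (q + 1) + (u ^ (q + 1))⁻¹ = algebraMap M K y)
    (f : Polynomial K)
    (hf : f = ∏ w : (GaloisField 2 n)ˣ,
        (((dickson 1 (1 : GaloisField 2 n) (q + 1)).map
            (algebraMap (GaloisField 2 n) K)).comp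
          (Polynomial.C (algebraMap (GaloisField 2 n) K w) * Polynomial.X)
          - Polynomial.C (algebraMap M K y))) :
    (∀ x : K, f.IsRoot x ↔
        ∃ (w : (GaloisField 2 n)ˣ) (ζ : K), ζ ^ (q + 1) = 1 ∧
          x = algebraMap (GaloisField 2 n) K w * (ζ * u + (ζ * u)⁻¹)) ∧
    (∀ (w₁ w₂ : (GaloisField 2 n)ˣ) (ζ₁ ζ₂ : K), ζ₁ ^ (q + 1) = 1 → ζ₂ ^ (q + 1) = 1 →
        algebraMap (GaloisField 2 n) K w₁ * (ζ₁ * u + (ζ₁ * u)⁻¹)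
          = algebraMap (GaloisField 2 n) K w₂ * (ζ₂ * u + (ζ₂ * u)⁻¹) →
        w₁ = w₂ ∧ ζ₁ = ζ₂) := by
  subst hq hf
  set φ := algebraMap (GaloisField 2 n) K
  have : CharP K 2 := charP_of_injective_algebraMap φ.injective 2
  have : IsSepClosed K := IsSepClosure.sep_closed M
  have hy' : algebraMap M K y ≠ 0 := (_root_.map_ne_zero _).2 hy
  have hs0 : u ^ (2 ^ n + 1) ≠ 0 := fun h ↦ hy' (by rw [← huy, h, inv_zero, add_zero])
  have hu : u ≠ 0 := ne_zero_pow (Nat.succ_ne_zero _) hs0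
  have hφ_inv (w : (GaloisField 2 n)ˣ) : φ ↑w⁻¹ = (φ w)⁻¹ := by simp
  have hφ_ne (w : (GaloisField 2 n)ˣ) : φ w ≠ 0 := (_root_.map_ne_zero φ).2 w.ne_zero
  refine ⟨fun x ↦ ?_, fun w₁ w₂ ζ₁ ζ₂ hζ₁ hζ₂ h ↦ ?_⟩
  · rw [isRoot_prod]
    simp only [Finset.mem_univ, true_and, IsRoot.def, eval_sub, eval_comp, eval_mul,
      eval_C, eval_X, map_dickson, map_one, sub_eq_zero, ← huy,
      dickson_one_one_eval_eq_add_inv_iff hu]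
    constructor
    · rintro ⟨w, ζ, hζ, hx⟩
      exact ⟨w⁻¹, ζ, hζ, by rw [hφ_inv, ← hx, inv_mul_cancel_left₀ (hφ_ne w)]⟩
    · rintro ⟨w, ζ, hζ, rfl⟩
      exact ⟨w⁻¹, ζ, hζ, by rw [hφ_inv, inv_mul_cancel_left₀ (hφ_ne w)]⟩
  · have hs1 : u ^ (2 ^ n + 1) ≠ 1 := fun h ↦ hy' (by
      rw [← huy, h, inv_one, CharTwo.add_self_eq_zero])
    have hφ_frob (w : (GaloisField 2 n)ˣ) : φ w ^ 2 ^ n = φ w := by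
      rw [← map_pow, GaloisField.pow_prime_pow_eq_self]
    obtain ⟨hw, hζ⟩ := eq_and_eq_of_mul_add_inv_eq_mul_add_inv hs0 hs1 (hφ_frob w₁) (hφ_frob w₂) (hφ_ne w₁)
      (by rw [mul_pow, hζ₁, one_mul]) (by rw [mul_pow, hζ₂, one_mul]) h
    exact ⟨Units.ext (φ.injective hw), mul_right_cancel₀ hu hζ⟩

/-- Let `M` be a field of characteristic 2, `y ∈ M` nonzero, `q = 2^n`, and `u` in the
separable closure `K` of `M` with `u^(q+1) + u^(-(q+1)) = y`.  Then the polynomial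
`f(x) = ∏_{w ∈ F_q^×} (D_(q+1)(w x) - y)` has exactly the `q² - 1` distinct roots
`w • (ζu + (ζu)⁻¹)` for `w ∈ F_q^×` and `ζ` a `(q+1)`-st root of unity: these values
are roots, every root is of this form, and the values are pairwise distinct. -/
theorem roots_of_dickson_product (n : ℕ) (hn : 0 < n) (q : ℕ) (hq : q = 2 ^ n)
    (M : Type*) [Field M] [CharP M 2] (y : M) (hy : y ≠ 0)
    (K : Type*) [Field K] [Algebra M K]
    [IsSepClosure M K] [Algebra (GaloisField 2 n) K]
    (u : K) (hu : u ≠ 0) (huy : u ^ (q + 1) + (u ^ (q + 1))⁻¹ = algebraMap M K y)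
    (f : Polynomial K)
    (hf : f = ∏ w : (GaloisField 2 n)ˣ,
        (((dickson 1 (1 : GaloisField 2 n) (q + 1)).map
            (algebraMap (GaloisField 2 n) K)).comp
          (Polynomial.C (algebraMap (GaloisField 2 n) K w) * Polynomial.X)
          - Polynomial.C (algebraMap M K y))) :
    (∀ x : K, f.IsRoot x ↔
        ∃ (w : (GaloisField 2 n)ˣ) (ζ : K), ζ ^ (q + 1) = 1 ∧
          x = algebraMap (GaloisField 2 n) K w * (ζ * u + (ζ * u)⁻¹)) ∧
    (∀ (w₁ w₂ : (GaloisField 2 n)ˣ) (ζ₁ ζ₂ : K), ζ₁ ^ (q + 1) = 1 → ζ₂ ^ (q + 1) = 1 →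
        algebraMap (GaloisField 2 n) K w₁ * (ζ₁ * u + (ζ₁ * u)⁻¹)
          = algebraMap (GaloisField 2 n) K w₂ * (ζ₂ * u + (ζ₂ * u)⁻¹) →
        w₁ = w₂ ∧ ζ₁ = ζ₂) :=
  roots_of_dickson_product_general n q hq M y hy K u huy f hf
end

section
/- Let F be a field of characteristic 2, q = 2^n with n > 1, T(x) = ∑_{i=0}^{n-1} x^{2^i - 1}, and C(x) = x·T(x)^{q+1}. For any nonzero a ∈ F, the polynomial C(x) + a has distinct roots over the algebraic closure of F, and all its roots are nonzero. -/
open Polynomial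

/-- Let `F` be a field of characteristic 2, `q = 2^n` with `n > 1`,
`T(x) = ∑_{i=0}^{n-1} x^(2^i - 1)` and `C(x) = x · T(x)^(q+1)`.  For any nonzero
`a ∈ F`, the polynomial `C(x) + a` has distinct roots over the algebraic closure
of `F`, and all of its roots are nonzero. -/
theorem mcm_plus_a_squarefree (F : Type*) [Field F] [CharP F 2]
    (n : ℕ) (hn : 1 < n) (q : ℕ) (hq : q = 2 ^ n)
    (T Cpoly : F[X])
    (hT : T = ∑ i ∈ Finset.range n, (X : F[X]) ^ (2 ^ i - 1))
    (hC : Cpoly = X * T ^ (q + 1))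
    (a : F) (ha : a ≠ 0) :
    ((Cpoly + Polynomial.C a).map (algebraMap F (AlgebraicClosure F))).roots.Nodup ∧
      (0 : AlgebraicClosure F) ∉
        ((Cpoly + Polynomial.C a).map (algebraMap F (AlgebraicClosure F))).roots := by
  have h2 : (2 : F) = 0 := by exact_mod_cast CharP.cast_eq_zero F 2
  have h2p : (2 : F[X]) = 0 := by exact_mod_cast CharP.cast_eq_zero F[X] 2
  -- Key identity: `X * T' + T = 1` in characteristic 2.
  have hXT : X * derivative T + T = 1 := by
    subst hT
    rw [derivative_sum, Finset.mul_sum, ← Finset.sum_add_distrib]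
    rw [Finset.sum_eq_single 0]
    · simp
    · intro i hi hi0
      have h1le : 2 ≤ 2 ^ i := Nat.one_lt_two_pow_iff.mpr hi0
      have hcast : ((2 ^ i - 1 : ℕ) : F) = 1 := by
        rw [Nat.cast_sub (by omega)]
        push_cast
        rw [h2, zero_pow hi0]
        ring_nf
        exact CharTwo.neg_eq 1
      rw [derivative_X_pow, hcast, map_one, one_mul, ← pow_succ']
      have h11 : 2 ^ i - 1 - 1 + 1 = 2 ^ i - 1 := by omega
      rw [h11]
      exact CharTwo.add_self_eq_zero _
    · intro h; exact absurd (Finset.mem_range.mpr (by omega)) h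
  have hXd : X * derivative T = 1 + T := by
    linear_combination hXT - T * h2p
  -- The derivative of `Cpoly + C a` is `T ^ q`.
  have hq1 : ((q + 1 : ℕ) : F) = 1 := by
    subst hq; push_cast; rw [h2, zero_pow (by positivity), zero_add]
  have hder : derivative (Cpoly + C a) = T ^ q := by
    rw [derivative_add, derivative_C, add_zero, hC, derivative_mul, derivative_X,
      one_mul, derivative_pow, Nat.add_sub_cancel, hq1, map_one, one_mul]
    linear_combination T ^ q * hXd + T ^ (q + 1) * h2p
  -- Separability: `Cpoly + C a` is coprime with its derivative `T ^ q`.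
  have hsep : (Cpoly + C a).Separable := by
    rw [Polynomial.separable_def, hder, hC]
    refine ⟨C a⁻¹, -(C a⁻¹ * X * T), ?_⟩
    have hCa : C a⁻¹ * C a = 1 := by rw [← C_mul, inv_mul_cancel₀ ha, C_1]
    linear_combination hCa
  refine ⟨Polynomial.nodup_roots (hsep.map), ?_⟩
  intro h0
  rw [Polynomial.mem_roots'] at h0
  have := h0.2
  rw [Polynomial.IsRoot, Polynomial.eval_map, hC] at this
  simp only [eval₂_add, eval₂_mul, eval₂_X, eval₂_C, zero_mul, zero_add] at this
  exact ha ((algebraMap F (AlgebraicClosure F)).injective (by simpa using this))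
end

section
/- Let p be prime, q = p^n, F a field of characteristic p, b ∈ F nonzero. Let r, r_0, r_1 be three distinct roots of x^{q+1} - bx + b, and set z = r_0/r, y = (r_1 - r)/(r_1 - r_0), ξ = y^q - y. Then y^{q-1} = z, ξ = y(z - 1), and z(z-1)^{q-1} = 1/(r-1) = ξ^{q-1}. -/
/-- Let `p` be prime, `q = p^n`, `F` a field of characteristic `p`, `b ∈ F` nonzero.
Let `r, r₀, r₁` be three distinct roots of `x^(q+1) - bx + b` in an algebraic closure,
and set `z = r₀/r`, `y = (r₁ - r)/(r₁ - r₀)`, `ξ = y^q - y`.  Then `y^(q-1) = z`,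
`ξ = y(z - 1)`, and `z(z-1)^(q-1) = 1/(r-1) = ξ^(q-1)`. -/
theorem cross_ratio_relations (p : ℕ) [Fact p.Prime] (n : ℕ) (hn : 0 < n) (q : ℕ)
    (hq : q = p ^ n) (F : Type*) [Field F] [CharP F p] (b : F) (hb : b ≠ 0)
    (r r₀ r₁ : AlgebraicClosure F)
    (hr : r ^ (q + 1) - algebraMap F (AlgebraicClosure F) b * r
        + algebraMap F (AlgebraicClosure F) b = 0)
    (hr₀ : r₀ ^ (q + 1) - algebraMap F (AlgebraicClosure F) b * r₀
        + algebraMap F (AlgebraicClosure F) b = 0)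
    (hr₁ : r₁ ^ (q + 1) - algebraMap F (AlgebraicClosure F) b * r₁
        + algebraMap F (AlgebraicClosure F) b = 0)
    (h01 : r ≠ r₀) (h02 : r ≠ r₁) (h12 : r₀ ≠ r₁)
    (z y ξ : AlgebraicClosure F)
    (hz : z = r₀ / r) (hy : y = (r₁ - r) / (r₁ - r₀)) (hξ : ξ = y ^ q - y) :
    y ^ (q - 1) = z ∧ ξ = y * (z - 1) ∧
      z * (z - 1) ^ (q - 1) = (r - 1)⁻¹ ∧ (r - 1)⁻¹ = ξ ^ (q - 1) := by
  haveI : CharP (AlgebraicClosure F) p :=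
    charP_of_injective_algebraMap (algebraMap F (AlgebraicClosure F)).injective p
  set B := algebraMap F (AlgebraicClosure F) b with hBdef
  have hB0 : B ≠ 0 := by
    simpa [hBdef] using (map_ne_zero (algebraMap F (AlgebraicClosure F))).mpr hb
  have hq1 : 1 ≤ q := by
    rw [hq]; exact Nat.one_le_pow _ _ (Fact.out (p := p.Prime)).pos
  have key : ∀ s : AlgebraicClosure F, s ^ (q + 1) - B * s + B = 0 →
      s ≠ 0 ∧ s ^ (q + 1) = B * (s - 1) := by
    intro s hs
    constructor
    · rintro rfl
      simp [pow_succ] at hs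
      exact hB0 hs
    · linear_combination hs
  obtain ⟨hrne, hre⟩ := key r hr
  obtain ⟨hr0ne, hr0e⟩ := key r₀ hr₀
  obtain ⟨hr1ne, hr1e⟩ := key r₁ hr₁
  have hrone : r ≠ 1 := by
    rintro rfl
    simp at hre
  have hrm1 : r - 1 ≠ 0 := sub_ne_zero.mpr hrone
  have diff : ∀ s t : AlgebraicClosure F, s ^ (q + 1) = B * (s - 1) →
      t ^ (q + 1) = B * (t - 1) → s ≠ t →
      (s - t) ^ (q - 1) * (s * t) = B := by
    intro s t hs ht hst
    have hfr : (s - t) ^ q = s ^ q - t ^ q := by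
      rw [hq]; exact sub_pow_char_pow s t n
    have hs' : s ^ q * s = B * (s - 1) := by rw [← pow_succ]; exact hs
    have ht' : t ^ q * t = B * (t - 1) := by rw [← pow_succ]; exact ht
    have h1 : (s - t) ^ q * (s * t) = B * (s - t) := by
      rw [hfr]
      linear_combination t * hs' - s * ht'
    have h2 : (s - t) ^ (q - 1) * (s - t) = (s - t) ^ q := by
      rw [← pow_succ, Nat.sub_add_cancel hq1]
    have hst' : s - t ≠ 0 := sub_ne_zero.mpr hst
    apply mul_right_cancel₀ hst'
    linear_combination (s * t) * h2 + h1
  have d1r : (r₁ - r) ^ (q - 1) * (r₁ * r) = B := diff r₁ r hr1e hre (Ne.symm h02)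
  have d10 : (r₁ - r₀) ^ (q - 1) * (r₁ * r₀) = B := diff r₁ r₀ hr1e hr0e (Ne.symm h12)
  have d0r : (r₀ - r) ^ (q - 1) * (r₀ * r) = B := diff r₀ r hr0e hre (Ne.symm h01)
  have e1r : (r₁ - r) ^ (q - 1) = B / (r₁ * r) :=
    (eq_div_iff (mul_ne_zero hr1ne hrne)).mpr d1r
  have e10 : (r₁ - r₀) ^ (q - 1) = B / (r₁ * r₀) :=
    (eq_div_iff (mul_ne_zero hr1ne hr0ne)).mpr d10
  have e0r : (r₀ - r) ^ (q - 1) = B / (r₀ * r) :=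
    (eq_div_iff (mul_ne_zero hr0ne hrne)).mpr d0r
  have g1 : y ^ (q - 1) = z := by
    rw [hy, hz, div_pow, e1r, e10]
    field_simp
  have hyq : y ^ q = y ^ (q - 1) * y := by
    rw [← pow_succ, Nat.sub_add_cancel hq1]
  have g2 : ξ = y * (z - 1) := by
    rw [hξ, hyq, g1]; ring
  have hz1 : z - 1 = (r₀ - r) / r := by
    rw [hz]; field_simp
  have hrq : r ^ (q - 1) * r * r = B * (r - 1) := by
    rw [← pow_succ, Nat.sub_add_cancel hq1, ← pow_succ]; exact hre
  have e_r : r ^ (q - 1) = B * (r - 1) / (r * r) :=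
    (eq_div_iff (mul_ne_zero hrne hrne)).mpr (by linear_combination hrq)
  have g3 : z * (z - 1) ^ (q - 1) = (r - 1)⁻¹ := by
    rw [hz1, div_pow, e0r, e_r, hz]
    field_simp
  refine ⟨g1, g2, g3, ?_⟩
  rw [g2, mul_pow, g1, g3]
end

section
/- Let p be prime, q = p^n, F a field of characteristic p, and b ∈ F nonzero. If r, r_0, r_1 are distinct roots of x^{q+1} - bx + b and ξ = y^q - y with y = (r_1-r)/(r_1-r_0), then ξ ≠ 0 and ξ^q + ξ ≠ 0 (equivalently y^{q^2} - y ≠ 0). -/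
/-- Let `p` be prime, `q = p ^ n`, `F` a field of characteristic `p`, `b ∈ F` nonzero.
Let `r, r₀, r₁` be three distinct roots of `x^(q+1) - bx + b` in an algebraic closure,
and set `y = (r₁ - r)/(r₁ - r₀)`, `ξ = y^q - y`.  Then `ξ ≠ 0` and
`ξ^q + ξ ≠ 0` (equivalently `y^(q²) - y ≠ 0`). -/
theorem xi_ne_zero (p : ℕ) [Fact p.Prime] (n : ℕ) (hn : 0 < n) (q : ℕ)
    (hq : q = p ^ n) (F : Type*) [Field F] [CharP F p] (b : F) (hb : b ≠ 0)
    (r r₀ r₁ : AlgebraicClosure F)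
    (hr : r ^ (q + 1) - algebraMap F (AlgebraicClosure F) b * r
        + algebraMap F (AlgebraicClosure F) b = 0)
    (hr₀ : r₀ ^ (q + 1) - algebraMap F (AlgebraicClosure F) b * r₀
        + algebraMap F (AlgebraicClosure F) b = 0)
    (hr₁ : r₁ ^ (q + 1) - algebraMap F (AlgebraicClosure F) b * r₁
        + algebraMap F (AlgebraicClosure F) b = 0)
    (h01 : r ≠ r₀) (h02 : r ≠ r₁) (h12 : r₀ ≠ r₁)
    (y ξ : AlgebraicClosure F)
    (hy : y = (r₁ - r) / (r₁ - r₀)) (hξ : ξ = y ^ q - y) :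
    ξ ≠ 0 ∧ ξ ^ q + ξ ≠ 0 := by
  haveI : CharP (AlgebraicClosure F) p :=
    charP_of_injective_algebraMap (algebraMap F (AlgebraicClosure F)).injective p
  set B := algebraMap F (AlgebraicClosure F) b with hBdef
  have hB0 : B ≠ 0 := fun h => hb ((algebraMap F (AlgebraicClosure F)).injective
    (by rw [← hBdef, h, map_zero]))
  have hfrob : ∀ a c : AlgebraicClosure F, (a - c) ^ q = a ^ q - c ^ q := by
    intro a c; rw [hq]; exact sub_pow_char_pow a c n
  have e : ∀ s : AlgebraicClosure F, s ^ (q + 1) - B * s + B = 0 → s ≠ 0 ∧ s - 1 ≠ 0 ∧ s ^ q = B * (s - 1) / s := by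
    intro s hs
    have hs0 : s ≠ 0 := by
      rintro rfl
      rw [zero_pow (Nat.succ_ne_zero q), mul_zero, sub_zero, zero_add] at hs
      exact hB0 hs
    have hs1 : s - 1 ≠ 0 := by
      rw [sub_ne_zero]
      rintro rfl
      rw [one_pow, mul_one, sub_add_cancel] at hs
      exact one_ne_zero hs
    refine ⟨hs0, hs1, ?_⟩
    rw [eq_div_iff hs0]
    linear_combination hs - pow_succ s q
  obtain ⟨h0r, h1r, hrq⟩ := e r hr
  obtain ⟨h0r0, h1r0, hr0q⟩ := e r₀ hr₀
  obtain ⟨h0r1, h1r1, hr1q⟩ := e r₁ hr₁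
  have hd10 : r₁ - r₀ ≠ 0 := sub_ne_zero.mpr h12.symm
  have hd1r : r₁ - r ≠ 0 := sub_ne_zero.mpr h02.symm
  have hd0r : r₀ - r ≠ 0 := sub_ne_zero.mpr h01.symm
  have hy0 : y ≠ 0 := by rw [hy]; exact div_ne_zero hd1r hd10
  have hnum : r₁ ^ q - r ^ q = B * (r₁ - r) / (r * r₁) := by
    rw [hrq, hr1q]; field_simp; ring
  have hden : r₁ ^ q - r₀ ^ q = B * (r₁ - r₀) / (r₀ * r₁) := by
    rw [hr0q, hr1q]; field_simp; ring
  have hyq : y ^ q = y * r₀ / r := by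
    rw [hy, div_pow, hfrob r₁ r, hfrob r₁ r₀, hnum, hden]
    field_simp
  have hξval : ξ = y * (r₀ - r) / r := by
    rw [hξ, hyq]; field_simp
  have hξ0 : ξ ≠ 0 := by
    rw [hξval]; exact div_ne_zero (mul_ne_zero hy0 hd0r) h0r
  have hyq2 : (y ^ q) ^ q = y * (r₀ - 1) / (r - 1) := by
    rw [hyq, div_pow, mul_pow, hyq, hr0q, hrq]
    field_simp
  have hsum : ξ ^ q + ξ = y * (r₀ - r) / (r - 1) := by
    rw [hξ, hfrob (y ^ q) y, hyq2]
    field_simp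
    ring
  refine ⟨hξ0, ?_⟩
  rw [hsum]
  exact div_ne_zero (mul_ne_zero hy0 hd0r) h1r
end

section
/- Let p be prime, q = p^n, F a field of characteristic p (not necessarily perfect), and b ∈ F nonzero. Then x^{q+1} - bx + b and x^{q+1} - b^p x + b^p have the same splitting field over F. -/
open Polynomial

/-- Let `p` be prime, `q = p^n`, `F` a field of characteristic `p` (not necessarily
perfect), and `b ∈ F` nonzero.  Then `x^(q+1) - bx + b` and `x^(q+1) - b^p x + b^p`
have the same splitting field over `F` (inside a fixed algebraic closure). -/
theorem same_splitting_field_frobenius (p : ℕ) [Fact p.Prime] (n : ℕ) (hn : 0 < n)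
    (q : ℕ) (hq : q = p ^ n) (F : Type*) [Field F] [CharP F p] (b : F) (hb : b ≠ 0) :
    IntermediateField.adjoin F
        ((X ^ (q + 1) - Polynomial.C b * X + Polynomial.C b).rootSet
          (AlgebraicClosure F))
      = IntermediateField.adjoin F
        ((X ^ (q + 1) - Polynomial.C (b ^ p) * X + Polynomial.C (b ^ p)).rootSet
          (AlgebraicClosure F)) := by
  have hp : p.Prime := Fact.out
  haveI : ExpChar F p := ExpChar.prime hp
  set E := AlgebraicClosure F with hE
  haveI : CharP E p := charP_of_injective_algebraMap (algebraMap F E).injective p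
  set f : F[X] := X ^ (q + 1) - C b * X + C b with hf
  set g : F[X] := X ^ (q + 1) - C (b ^ p) * X + C (b ^ p) with hg
  have hf0 : f ≠ 0 := by
    intro h
    have := congrArg (eval 0) h
    simp [hf] at this
    exact hb this
  have hg0 : g ≠ 0 := by
    intro h
    have := congrArg (eval 0) h
    simp [hg] at this
    exact hb this.1
  -- (q+1 : F) = 1
  have hqF : ((q : F) + 1) = 1 := by
    rw [hq]
    push_cast
    rw [CharP.cast_eq_zero F p, zero_pow hn.ne', zero_add]
  have hderiv : derivative f = X ^ q - C b := by
    rw [hf]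
    simp only [derivative_add, derivative_sub, derivative_X_pow, derivative_C_mul,
      derivative_X, derivative_C, mul_one, add_zero]
    push_cast
    rw [hqF, C_1, one_mul]
  have hsep : f.Separable := by
    refine ⟨C b⁻¹, -(C b⁻¹) * X, ?_⟩
    have key : f - X * (X ^ q - C b) = C b := by rw [hf]; ring
    calc C b⁻¹ * f + -(C b⁻¹) * X * derivative f
        = C b⁻¹ * (f - X * (X ^ q - C b)) := by rw [hderiv]; ring
      _ = C b⁻¹ * C b := by rw [key]
      _ = 1 := by rw [← C_mul, inv_mul_cancel₀ hb, C_1]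
  -- aeval computation
  have haev : ∀ r : E, (aeval r f) ^ p = aeval (r ^ p) g := by
    intro r
    simp only [hf, hg, map_add, map_sub, map_mul, map_pow, aeval_X, aeval_C]
    rw [add_pow_char, sub_pow_char, mul_pow, ← pow_mul, mul_comm (q + 1) p, pow_mul]
  have himg : g.rootSet E = (· ^ p) '' (f.rootSet E) := by
    ext x
    constructor
    · intro hx
      rw [mem_rootSet] at hx
      obtain ⟨r, hr⟩ := IsAlgClosed.exists_pow_nat_eq x (n := p) hp.pos
      refine ⟨r, ?_, hr⟩
      rw [mem_rootSet]
      refine ⟨hf0, ?_⟩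
      have h2 : (aeval r f) ^ p = 0 := by rw [haev r, hr, hx.2]
      exact pow_eq_zero_iff hp.ne_zero |>.mp h2
    · rintro ⟨r, hr, rfl⟩
      rw [mem_rootSet] at hr ⊢
      refine ⟨hg0, ?_⟩
      rw [← haev r, hr.2, zero_pow hp.ne_zero]
  haveI : Algebra.IsSeparable F (IntermediateField.adjoin F (f.rootSet E)) := by
    rw [IntermediateField.isSeparable_adjoin_iff_isSeparable]
    intro x hx
    rw [mem_rootSet] at hx
    exact hsep.of_dvd (minpoly.dvd F x hx.2)
  rw [himg]
  exact IntermediateField.adjoin_eq_adjoin_pow_expChar_of_isSeparable F E (f.rootSet E) p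
end

section
/- Let q = 2^n with n ≥ 1, and let F_{q,1} = {d ∈ F_q : Tr_{F_q/F_2}(d) = 1}. Then {1/(ζ + ζ^{-1}) : ζ ∈ μ_{q+1}, ζ ≠ 1} = F_{q,1}, where μ_{q+1} is the group of (q+1)-st roots of unity in F_{q^2}. -/
/-!
Write `Tr_k(a) = ∑_{i<k} a^(2^i)`. If `ζ + ζ⁻¹ = x⁻¹` then `y = ζx` solves the Artin–Schreier
equation `y² + y = x²`, and iterating squaring gives `y^(2^k) = y + Tr_k(x²)`. For `x ∈ F_q` this
reads `ζ^q x = ζx + Tr_n(x)`, while `ζ⁻¹x = ζx + 1`; so `ζ^(q+1) = 1` exactly when `Tr_n(x) = 1`.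
Conversely, given `x ∈ F_q` the equation `y² + y = x²` is solvable in `F_(q²)`: a root `y` in an
algebraic closure satisfies `y^(q²) = y + Tr_{2n}(x²) = y + 2 Tr_n(x²) = y`, so it lies in `F_(q²)`.
-/

open Finset Polynomial

section Semiring

variable {R : Type*} [Semiring R]

def absTrace (n : ℕ) (x : R) : R := ∑ i ∈ range n, x ^ 2 ^ i

theorem absTrace_one (x : R) : absTrace 1 x = x := by
  simp [absTrace]

theorem absTrace_add (m n : ℕ) (x : R) :
    absTrace (m + n) x = absTrace m x + absTrace n (x ^ 2 ^ m) := by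
  simp only [absTrace, sum_range_add, ← pow_mul, ← pow_add]

theorem map_absTrace {S F : Type*} [Semiring S] [FunLike F R S] [RingHomClass F R S] (f : F)
    (n : ℕ) (x : R) : f (absTrace n x) = absTrace n (f x) := by
  simp [absTrace]

end Semiring

theorem absTrace_sq_of_pow_eq {R : Type*} [Ring R] {n : ℕ} {x : R} (hx : x ^ 2 ^ n = x) :
    absTrace n (x ^ 2) = absTrace n x := by
  have h := (absTrace_add 1 n x).symm.trans (add_comm 1 n ▸ absTrace_add n 1 x)
  rwa [hx, absTrace_one, pow_one, add_comm x, add_left_inj] at h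

section CommRing

variable {R : Type*} [CommRing R] [CharP R 2]

theorem absTrace_sq (n : ℕ) (x : R) : absTrace n x ^ 2 = absTrace n (x ^ 2) := by
  simp only [absTrace, sum_pow_char, ← pow_mul, mul_comm]

theorem absTrace_two_mul_eq_zero {n : ℕ} {x : R} (hx : x ^ 2 ^ n = x) :
    absTrace (2 * n) x = 0 := by
  rw [two_mul, absTrace_add, hx, CharTwo.add_self_eq_zero]

theorem pow_two_pow_eq_add_absTrace {y a : R} (h : y ^ 2 + y = a) (k : ℕ) :
    y ^ 2 ^ k = y + absTrace k a := by
  induction k with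
  | zero => simp [absTrace]
  | succ k ih =>
    rw [pow_succ, pow_mul, ih, add_comm k 1, absTrace_add 1 k, absTrace_one, CharTwo.add_sq,
      absTrace_sq, ← h, pow_one]
    linear_combination -y * CharTwo.two_eq_zero (R := R)

end CommRing

section Field

variable {K : Type*} [Field K] [CharP K 2]

theorem exists_sq_add_self_eq_of_absTrace_eq_zero [Finite K] {m : ℕ} (hK : Nat.card K = 2 ^ m)
    {a : K} (ha : absTrace m a = 0) : ∃ y, y ^ 2 + y = a := by
  let L := AlgebraicClosure K
  obtain ⟨z, hz⟩ := IsAlgClosed.exists_root (X ^ 2 + X - C (algebraMap K L a)) (by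
    rw [show (X ^ 2 + X - C _ : L[X]).degree = 2 by compute_degree!]; decide)
  replace hz : z ^ 2 + z = algebraMap K L a := by
    simpa [sub_eq_zero] using hz
  have hfix : z ^ Nat.card K = z := by
    rw [hK, pow_two_pow_eq_add_absTrace hz, ← map_absTrace, ha, map_zero, add_zero]
  obtain ⟨y, rfl⟩ := splits_X_pow_nat_card_sub_X.mem_range_of_isRoot
    (FiniteField.X_pow_card_sub_X_ne_zero K Finite.one_lt_card) (i := algebraMap K L) (x := z)
    (by simp [hfix])
  exact ⟨y, (algebraMap K L).injective (by simpa using hz)⟩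


theorem add_inv_eq_inv_iff {ζ x : K} (hx : x ≠ 0) :
    ζ + ζ⁻¹ = x⁻¹ ↔ (ζ * x) ^ 2 + ζ * x = x ^ 2 := by
  rcases eq_or_ne ζ 0 with rfl | hζ
  · simp [hx, eq_comm (a := (0 : K))]
  calc ζ + ζ⁻¹ = x⁻¹ ↔ (ζ * x) ^ 2 + x ^ 2 = ζ * x := by field_simp
    _ ↔ (ζ * x) ^ 2 + ζ * x = x ^ 2 := by
        rw [CharTwo.add_eq_iff_eq_add, add_comm, ← CharTwo.add_eq_iff_eq_add, eq_comm]

theorem add_inv_ne_zero {ζ : K} (h0 : ζ ≠ 0) (h1 : ζ ≠ 1) : ζ + ζ⁻¹ ≠ 0 := by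
  rw [Ne, CharTwo.add_eq_zero, ← mul_eq_one_iff_eq_inv₀ h0, ← sq, ← one_pow 2, CharTwo.sq_inj]
  exact h1

theorem add_inv_pow_two_pow {n : ℕ} {ζ : K} (hζ : ζ ^ (2 ^ n + 1) = 1) :
    (ζ + ζ⁻¹) ^ 2 ^ n = ζ + ζ⁻¹ := by
  have h : ζ ^ 2 ^ n = ζ⁻¹ := eq_inv_of_mul_eq_one_left (by rwa [← pow_succ])
  rw [add_pow_char_pow, inv_pow, h, inv_inv, add_comm]

theorem pow_two_pow_add_one_eq_one_iff {n : ℕ} {ζ x : K} (hx0 : x ≠ 0) (hxq : x ^ 2 ^ n = x)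
    (hζ : ζ + ζ⁻¹ = x⁻¹) : ζ ^ (2 ^ n + 1) = 1 ↔ absTrace n x = 1 := by
  have hζ0 : ζ ≠ 0 := by rintro rfl; simp [eq_comm, hx0] at hζ
  have key : ζ ^ 2 ^ n * x = ζ * x + absTrace n x := by
    rw [← absTrace_sq_of_pow_eq hxq, ← pow_two_pow_eq_add_absTrace ((add_inv_eq_inv_iff hx0).1 hζ),
      mul_pow, hxq]
  have hinv : ζ⁻¹ * x = ζ * x + 1 := by
    rw [← CharTwo.add_cancel_left ζ ζ⁻¹, hζ, add_mul, inv_mul_cancel₀ hx0, add_comm]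
  rw [pow_succ, mul_eq_one_iff_eq_inv₀ hζ0, ← mul_left_inj' hx0, key, hinv, add_right_inj]

end Field

theorem inv_ang_zeta_eq_trace_one_general (n : ℕ) (q : ℕ) (hq : q = 2 ^ n) :
    {x : GaloisField 2 (2 * n) | ∃ ζ : GaloisField 2 (2 * n),
        ζ ^ (q + 1) = 1 ∧ ζ ≠ 1 ∧ x = (ζ + ζ⁻¹)⁻¹}
      = {d : GaloisField 2 (2 * n) | d ^ q = d ∧
          ∑ i ∈ Finset.range n, d ^ 2 ^ i = 1} := by
  subst hq
  ext x
  constructor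
  · rintro ⟨ζ, hζq, hζ1, rfl⟩
    have hζ0 : ζ ≠ 0 := by rintro rfl; simp at hζq
    have hxq : (ζ + ζ⁻¹)⁻¹ ^ 2 ^ n = (ζ + ζ⁻¹)⁻¹ := by rw [inv_pow, add_inv_pow_two_pow hζq]
    exact ⟨hxq, (pow_two_pow_add_one_eq_one_iff (inv_ne_zero (add_inv_ne_zero hζ0 hζ1)) hxq
      (inv_inv _).symm).1 hζq⟩
  · rintro ⟨hxq, hT⟩
    have hx0 : x ≠ 0 := by rintro rfl; simp at hT
    have hn : n ≠ 0 := by rintro rfl; simp at hT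
    obtain ⟨y, hy⟩ :=
      exists_sq_add_self_eq_of_absTrace_eq_zero (GaloisField.card 2 (2 * n) (by omega))
      (absTrace_two_mul_eq_zero (x := x ^ 2) (by rw [pow_right_comm, hxq]))
    have hζ : y * x⁻¹ + (y * x⁻¹)⁻¹ = x⁻¹ := by
      rwa [add_inv_eq_inv_iff hx0, inv_mul_cancel_right₀ hx0]
    refine ⟨y * x⁻¹, (pow_two_pow_add_one_eq_one_iff hx0 hxq hζ).2 hT, ?_, by rw [hζ, inv_inv]⟩
    intro h
    rw [h, inv_one, CharTwo.add_self_eq_zero] at hζ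
    exact inv_ne_zero hx0 hζ.symm

/-- Let `q = 2^n`.  Inside `F_(q²) = GaloisField 2 (2n)`, the set of values
`1/(ζ + ζ⁻¹)` for `ζ` a `(q+1)`-st root of unity, `ζ ≠ 1`, is exactly the set of
elements of the subfield `F_q` (i.e. `d^q = d`) of absolute trace `1`, where the
absolute trace of `d ∈ F_q` is `∑_{i=0}^{n-1} d^(2^i)`. -/
theorem inv_ang_zeta_eq_trace_one (n : ℕ) (hn : 0 < n) (q : ℕ) (hq : q = 2 ^ n) :
    {x : GaloisField 2 (2 * n) | ∃ ζ : GaloisField 2 (2 * n),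
        ζ ^ (q + 1) = 1 ∧ ζ ≠ 1 ∧ x = (ζ + ζ⁻¹)⁻¹}
      = {d : GaloisField 2 (2 * n) | d ^ q = d ∧
          ∑ i ∈ Finset.range n, d ^ 2 ^ i = 1} :=
  inv_ang_zeta_eq_trace_one_general n q hq
end

section
/- Let q = 2^n with n > 1, and let F_{q,1} = {j ∈ F_q : Tr_{F_q/F_2}(j) = 1}. Then for an indeterminate y over F_q, the identity ∏_{c ∈ F_q^×, j ∈ F_{q,1}} (c y^2 + y + j/c) = 1 + (y^q + y)^{q-1} holds in F_q[y]. -/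
/-!
Every `a ∈ 𝔽_q` is a root of `X² + X - (a² + a)`, and `a² + a` has trace zero because the trace
is invariant under Frobenius. Exactly half of `𝔽_q` has trace zero, so the product of
`X² + X + j` over the trace-zero `j` is monic of degree `q` and vanishes on `𝔽_q`: it is
`X^q + X`. Substituting `X² + X` into `∏ₐ (X - a) = X^q - X` shows that the product over all `j`
is `(X^q + X)(X^q + X + 1)`, hence the product over the trace-one `j` is `X^q + X + 1`.
Substituting `y ↦ c y` (and using `c^q = c`) turns the inner product for fixed `c` into
`c^{-q/2} (c (y^q + y) + 1)`; finally `∏_{c ≠ 0} c = -1 = 1` and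
`∏_{c ≠ 0} (c Y + 1) = Y^{q-1} + 1`.
-/

open Polynomial

noncomputable instance {n : ℕ} : Fintype (GaloisField 2 n) := Fintype.ofFinite _
noncomputable instance {n : ℕ} :
    DecidablePred (fun j : GaloisField 2 n =>
      Algebra.trace (ZMod 2) (GaloisField 2 n) j = 1) :=
  Classical.decPred _

open Finset

variable {K : Type*} [Field K]

theorem Polynomial.prod_C_mul_X_sq_add_X_add_C_div (s : Finset K) {c : K} (hc : c ≠ 0) :
    ∏ j ∈ s, (C c * X ^ 2 + X + C (j / c)) =
      C c⁻¹ ^ #s * (∏ j ∈ s, (X ^ 2 + X + C j)).comp (C c * X) := by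
  rw [Polynomial.prod_comp, ← prod_const, ← prod_mul_distrib]
  refine prod_congr rfl fun j _ => ?_
  have hcinv : C c⁻¹ * C c = (1 : K[X]) := by rw [← C_mul, inv_mul_cancel₀ hc, C_1]
  simp only [add_comp, pow_comp, X_comp, C_comp, div_eq_mul_inv, C_mul]
  linear_combination (-(C c * X ^ 2 + X)) * hcinv

namespace FiniteField

theorem prod_univ_units_val_eq_one [Fintype Kˣ] [CharP K 2] : ∏ c : Kˣ, (c : K) = 1 := by
  rw [← Units.coe_prod, prod_univ_units_id_eq_neg_one, Units.val_neg, Units.val_one,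
    CharTwo.neg_eq]

theorem prod_univ_units_inv_eq_one [Fintype Kˣ] [CharP K 2] : ∏ c : Kˣ, (c : K)⁻¹ = 1 := by
  rw [prod_inv_distrib, prod_univ_units_val_eq_one, inv_one]

variable [Fintype K]

theorem prod_X_sub_C_eq_X_pow_card_sub_X : ∏ a : K, (X - C a) = X ^ Fintype.card K - X := by
  have hmonic : (X ^ Fintype.card K - X : K[X]).Monic :=
    monic_X_pow_sub (by rw [degree_X]; exact_mod_cast Fintype.one_lt_card)
  have h := prod_multiset_X_sub_C_of_monic_of_roots_card_eq hmonic (by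
    rw [roots_X_pow_card_sub_X, X_pow_card_sub_X_natDegree_eq K Fintype.one_lt_card]; rfl)
  rwa [roots_X_pow_card_sub_X] at h

theorem eq_X_pow_card_sub_X_of_forall_eval_eq_zero {P : K[X]} (hP : P.Monic)
    (hdeg : P.natDegree = Fintype.card K) (hroot : ∀ a, P.eval a = 0) :
    P = X ^ Fintype.card K - X := by
  refine eq_of_monic_of_dvd_of_natDegree_le
    (monic_X_pow_sub (by rw [degree_X]; exact_mod_cast Fintype.one_lt_card)) hP ?_ ?_
  · rw [← prod_X_sub_C_eq_X_pow_card_sub_X]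
    exact prod_dvd_of_coprime
      (fun a _ b _ hab => pairwise_coprime_X_sub_C Function.injective_id hab)
      fun a _ => dvd_iff_isRoot.mpr (hroot a)
  · rw [hdeg, X_pow_card_sub_X_natDegree_eq K Fintype.one_lt_card]

theorem prod_units_eq_prod_erase_zero [Fintype Kˣ] [DecidableEq K] {M : Type*} [CommMonoid M]
    (f : K → M) : ∏ c : Kˣ, f c = ∏ a ∈ univ.erase 0, f a :=
  prod_bij (fun c _ => c) (by simp) (fun _ _ _ _ => Units.ext)
    (fun a ha => ⟨Units.mk0 a (ne_of_mem_erase ha), mem_univ _, rfl⟩) fun _ _ => rfl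

theorem prod_units_X_sub_C [Fintype Kˣ] :
    ∏ c : Kˣ, (X - C (c : K)) = X ^ (Fintype.card K - 1) - 1 := by
  classical
  apply mul_left_cancel₀ (X_ne_zero (R := K))
  rw [prod_units_eq_prod_erase_zero (fun a => X - C a), mul_sub, mul_one, ← pow_succ',
    Nat.sub_add_cancel Fintype.card_pos, ← prod_X_sub_C_eq_X_pow_card_sub_X,
    ← mul_prod_erase univ _ (mem_univ 0), C_0, sub_zero]

section CharTwo

variable [CharP K 2]

theorem prod_X_sq_add_X_add_C :
    ∏ a : K, (X ^ 2 + X + C a) =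
      (X ^ Fintype.card K + X) * (X ^ Fintype.card K + X + 1) := by
  have h := congrArg (fun p : K[X] => p.comp (X ^ 2 + X))
    (prod_X_sub_C_eq_X_pow_card_sub_X (K := K))
  simp only [Polynomial.prod_comp, X_comp, C_comp, pow_comp, add_comp, CharTwo.sub_eq_add] at h
  rw [h, ← expand_card, mul_add_one, ← sq, CharTwo.add_sq, map_add, map_pow, expand_X]
  ring

theorem prod_units_C_mul_add_one [Fintype Kˣ] (p : K[X]) :
    ∏ c : Kˣ, (C (c : K) * p + 1) = p ^ (Fintype.card K - 1) + 1 := by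
  have hfactor (c : Kˣ) : C (c : K) * X + 1 = C (c : K) * (X - C ((c⁻¹ : Kˣ) : K)) := by
    rw [CharTwo.sub_eq_add, mul_add, ← C_mul, Units.mul_inv, C_1]
  have hX : ∏ c : Kˣ, (C (c : K) * X + 1) = X ^ (Fintype.card K - 1) + 1 := by
    rw [prod_congr rfl fun c _ => hfactor c, prod_mul_distrib, ← map_prod,
      prod_univ_units_val_eq_one, C_1, one_mul,
      Fintype.prod_equiv (Equiv.inv Kˣ) (fun c => X - C ((c⁻¹ : Kˣ) : K))
        (fun c => X - C (c : K)) fun _ => rfl,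
      prod_units_X_sub_C, CharTwo.sub_eq_add]
  simpa only [Polynomial.prod_comp, add_comp, mul_comp, C_comp, X_comp, one_comp, pow_comp]
    using congrArg (fun f : K[X] => f.comp p) hX

end CharTwo

section Trace

variable [Algebra (ZMod 2) K]

local notation "Tr" => Algebra.trace (ZMod 2) K

theorem trace_sq (a : K) : Tr (a ^ 2) = Tr a := by
  simpa [coe_frobeniusAlgEquivOfAlgebraic] using
    Algebra.trace_eq_of_algEquiv (frobeniusAlgEquivOfAlgebraic (ZMod 2) K) a

theorem trace_sq_add_self (a : K) : Tr (a ^ 2 + a) = 0 := by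
  rw [map_add, trace_sq, CharTwo.add_self_eq_zero]

variable [DecidablePred fun j : K => Algebra.trace (ZMod 2) K j = 1]

theorem card_filter_trace_ne_one : #{j : K | Tr j ≠ 1} = #{j : K | Tr j = 1} := by
  have hsurj := Algebra.trace_surjective (ZMod 2) K
  have hZMod2 : ∀ t : ZMod 2, t ≠ 1 ↔ t = 0 := by decide
  calc #{j : K | Tr j ≠ 1} = #{j : K | Tr j = 0} := by simp only [hZMod2]
    _ = #{j : K | Tr j = 1} := by
        convert AddMonoidHom.card_fiber_eq_of_mem_range Tr (hsurj 0) (hsurj 1)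

theorem two_mul_card_filter_trace_ne_one : 2 * #{j : K | Tr j ≠ 1} = Fintype.card K := by
  rw [two_mul]
  nth_rw 2 [card_filter_trace_ne_one]
  rw [add_comm, card_filter_add_card_filter_not, card_univ]

theorem prod_filter_trace_ne_one :
    ∏ j : K with Tr j ≠ 1, (X ^ 2 + X + C j) = X ^ Fintype.card K - X := by
  have hmonic (j : K) : (X ^ 2 + X + C j : K[X]).Monic := by monicity!
  have hdeg (j : K) : (X ^ 2 + X + C j : K[X]).natDegree = 2 := by compute_degree!
  refine eq_X_pow_card_sub_X_of_forall_eval_eq_zero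
    (monic_prod_of_monic _ _ fun j _ => hmonic j) ?_ fun a => ?_
  · rw [natDegree_prod_of_monic _ _ fun j _ => hmonic j, sum_congr rfl fun j _ => hdeg j,
      sum_const, smul_eq_mul, mul_comm, two_mul_card_filter_trace_ne_one]
  · rw [eval_prod]
    refine prod_eq_zero (i := -(a ^ 2 + a)) ?_ (by simp)
    simp only [mem_filter, mem_univ, true_and, map_neg, trace_sq_add_self, neg_zero]
    exact zero_ne_one

theorem prod_filter_trace_eq_one :
    ∏ j : K with Tr j = 1, (X ^ 2 + X + C j) = X ^ Fintype.card K + X + 1 := by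
  have : CharP K 2 := charP_of_injective_algebraMap' (ZMod 2) 2
  apply mul_left_cancel₀ (X_pow_card_sub_X_ne_zero K (p := Fintype.card K) Fintype.one_lt_card)
  rw [CharTwo.sub_eq_add, ← prod_X_sq_add_X_add_C,
    ← prod_filter_not_mul_prod_filter univ (fun j => Tr j = 1), prod_filter_trace_ne_one,
    CharTwo.sub_eq_add]

end Trace

end FiniteField

/-- Let `q = 2^n` with `n > 1`.  For an indeterminate `y` over `F_q`,
`∏_{c ∈ F_q^×, j ∈ F_(q,1)} (c y² + y + j/c) = 1 + (y^q + y)^(q-1)` in `F_q[y]`,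
where `F_(q,1)` is the set of elements of `F_q` of absolute trace 1. -/
theorem product_identity (n : ℕ) (hn : 1 < n) (q : ℕ) (hq : q = 2 ^ n) :
    ∏ c : (GaloisField 2 n)ˣ,
      ∏ j ∈ Finset.univ.filter (fun j : GaloisField 2 n =>
          Algebra.trace (ZMod 2) (GaloisField 2 n) j = 1),
        (Polynomial.C ((c : GaloisField 2 n)) * X ^ 2 + X
          + Polynomial.C (j / (c : GaloisField 2 n)))
      = 1 + ((X : (GaloisField 2 n)[X]) ^ q + X) ^ (q - 1) := by
  have hcard : Fintype.card (GaloisField 2 n) = q := by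
    rw [hq, ← Nat.card_eq_fintype_card, GaloisField.card 2 n (by omega)]
  rw [prod_congr rfl fun c _ => prod_C_mul_X_sq_add_X_add_C_div _ c.ne_zero, prod_mul_distrib,
    prod_pow, ← map_prod, FiniteField.prod_univ_units_inv_eq_one, C_1, one_pow, one_mul,
    FiniteField.prod_filter_trace_eq_one]
  simp only [add_comp, pow_comp, X_comp, one_comp, mul_pow, ← C_pow, FiniteField.pow_card,
    ← mul_add]
  rw [FiniteField.prod_units_C_mul_add_one, hcard, add_comm]
end
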